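/- arXiv:1812.06498 — 2 statements merged into one kernel-verified Lean document; each statement's English description precedes it below -/
import Mathlib

section
/- Let H₀ and H₊₊ be the left-invariant vector fields on SL₂(ℂ) generated by [[1,0],[0,-1]] and [[0,1],[0,0]], respectively. Then a holomorphic function f on SL₂(ℂ) with H₀·f = -2f and H₊₊·f = 0 vanishes identically. -/
open Matrix

attribute [local instance] Matrix.normedAddCommGroup Matrix.normedSpace

/-- a holomorphic function `f` on `SL₂(ℂ)` satisfying `H₀·f = -2f` and
`H₊₊·f = 0`, for the left-invariant holomorphic vector fields `H₀`, `H₊₊` generated by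
`[[1,0],[0,-1]]` and `[[0,1],[0,0]]` (whose value at `U` is `U·H⁰₀`, resp. `U·H⁰₊₊`),
vanishes identically on `SL₂(ℂ)`.  We realise `SL₂(ℂ)` as the subset `{U | det U = 1}`
of the space of 2×2 complex matrices and `f` as (the restriction of) a function
holomorphic near it. -/
theorem stmt12
    (S : Set (Matrix (Fin 2) (Fin 2) ℂ)) (hS : S = {U | U.det = 1})
    (f : Matrix (Fin 2) (Fin 2) ℂ → ℂ)
    (hf : ∀ U ∈ S, DifferentiableAt ℂ f U)
    (hH0 : ∀ U ∈ S, fderiv ℂ f U (U * !![1, 0; 0, -1]) = -2 * f U)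
    (hHpp : ∀ U ∈ S, fderiv ℂ f U (U * !![0, 1; 0, 0]) = 0) :
    ∀ U ∈ S, f U = 0 := by
  subst hS
  simp only [Set.mem_setOf_eq] at hf hH0 hHpp ⊢
  -- Step 1: invariance under right multiplication by upper unipotents
  have hN : ∀ U : Matrix (Fin 2) (Fin 2) ℂ, U.det = 1 → ∀ t : ℂ,
      f (U * !![1, t; 0, 1]) = f U := by
    intro U hU t
    have hdet : ∀ s : ℂ, (U * !![1, s; 0, 1]).det = 1 := by
      intro s; rw [Matrix.det_mul, hU, Matrix.det_fin_two_of]; ring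
    have hc : ∀ s : ℂ, U * !![1, s; 0, 1] = U + s • (U * !![0,1;0,0]) := by
      intro s; ext i j
      fin_cases i <;> fin_cases j <;> simp [Matrix.mul_apply, Fin.sum_univ_two] <;> ring
    have hderiv : ∀ s : ℂ, HasDerivAt (fun s => f (U * !![1, s; 0, 1])) 0 s := by
      intro s
      have h1 : HasDerivAt (fun s : ℂ => U * !![1, s; 0, 1]) (U * !![0,1;0,0]) s := by
        simp only [hc]
        have X := ((hasDerivAt_id s).smul_const (U * !![0,1;0,0])).const_add U
        simp only [one_smul, id_eq] at X
        exact X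
      have h2 := (hf _ (hdet s)).hasFDerivAt.comp_hasDerivAt s h1
      have h3 : U * !![0,1;0,0] = (U * !![1, s; 0, 1]) * !![0,(1:ℂ);0,0] := by
        ext i j
        fin_cases i <;> fin_cases j <;> simp [Matrix.mul_apply, Fin.sum_univ_two] <;> ring
      rw [h3] at h2
      have h2 : HasDerivAt (fun s => f (U * !![1, s; 0, 1]))
          (fderiv ℂ f (U * !![1, s; 0, 1]) (U * !![1, s; 0, 1] * !![0, 1; 0, 0])) s := h2
      rw [hHpp _ (hdet s)] at h2
      exact h2
    have hconst := is_const_of_deriv_eq_zero (𝕜 := ℂ)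
      (fun s => (hderiv s).differentiableAt) (fun s => (hderiv s).deriv) t 0
    simpa [Matrix.one_fin_two.symm] using hconst
  -- Step 2: scaling under right multiplication by diagonal torus
  have hT : ∀ U : Matrix (Fin 2) (Fin 2) ℂ, U.det = 1 → ∀ t : ℂ,
      f (U * !![Complex.exp t, 0; 0, Complex.exp (-t)])
        = Complex.exp (-(2*t)) * f U := by
    intro U hU t
    set A := U * !![(1:ℂ),0;0,0] with hA
    set B := U * !![(0:ℂ),0;0,1] with hB
    have hdet : ∀ s : ℂ, (U * !![Complex.exp s, 0; 0, Complex.exp (-s)]).det = 1 := by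
      intro s
      rw [Matrix.det_mul, hU, Matrix.det_fin_two_of]
      simp [← Complex.exp_add]
    have hc : ∀ s : ℂ, U * !![Complex.exp s, 0; 0, Complex.exp (-s)]
        = Complex.exp s • A + Complex.exp (-s) • B := by
      intro s; ext i j
      fin_cases i <;> fin_cases j <;>
        simp [hA, hB, Matrix.mul_apply, Fin.sum_univ_two] <;> ring
    have hderiv : ∀ s : ℂ, HasDerivAt
        (fun s => Complex.exp (2*s) * f (U * !![Complex.exp s, 0; 0, Complex.exp (-s)])) 0 s := by
      intro s
      have h1 : HasDerivAt (fun s : ℂ => U * !![Complex.exp s, 0; 0, Complex.exp (-s)])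
          (Complex.exp s • A + (-Complex.exp (-s)) • B) s := by
        simp only [hc]
        have hne : HasDerivAt (fun s : ℂ => Complex.exp (-s)) (-Complex.exp (-s)) s := by
          simpa only [Function.comp_def, mul_neg, mul_one] using (Complex.hasDerivAt_exp (-s)).comp s (hasDerivAt_neg s)
        exact ((Complex.hasDerivAt_exp s).smul_const A).add (hne.smul_const B)
      have hval : Complex.exp s • A + (-Complex.exp (-s)) • B
          = (U * !![Complex.exp s, 0; 0, Complex.exp (-s)]) * !![(1:ℂ), 0; 0, -1] := by
        ext i j
        fin_cases i <;> fin_cases j <;>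
          simp [hA, hB, Matrix.mul_apply, Fin.sum_univ_two] <;> ring
      rw [hval] at h1
      have h2 := (hf _ (hdet s)).hasFDerivAt.comp_hasDerivAt s h1
      have h2 : HasDerivAt (fun s => f (U * !![Complex.exp s, 0; 0, Complex.exp (-s)]))
          (fderiv ℂ f (U * !![Complex.exp s, 0; 0, Complex.exp (-s)])
            (U * !![Complex.exp s, 0; 0, Complex.exp (-s)] * !![1, 0; 0, -1])) s := h2
      rw [hH0 _ (hdet s)] at h2
      have h3' : HasDerivAt (fun s : ℂ => (2:ℂ) * s) 2 s := by
        simpa using (hasDerivAt_id s).const_mul (2:ℂ)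
      have h3 := (Complex.hasDerivAt_exp (2*s)).comp s h3'
      simp only [Function.comp_def] at h2 h3
      have h4 : HasDerivAt (fun s => Complex.exp (2*s) * f (U * !![Complex.exp s, 0; 0, Complex.exp (-s)]))
          (Complex.exp (2*s) * 2 * f (U * !![Complex.exp s, 0; 0, Complex.exp (-s)]) +
            Complex.exp (2*s) * (-2 * f (U * !![Complex.exp s, 0; 0, Complex.exp (-s)]))) s := h3.mul h2
      convert h4 using 1
      ring
    have hconst := is_const_of_deriv_eq_zero (𝕜 := ℂ)
      (fun s => (hderiv s).differentiableAt) (fun s => (hderiv s).deriv) t 0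
    have h0 : U * !![Complex.exp 0, 0; 0, Complex.exp (-0)] = U := by
      simp [Matrix.one_fin_two.symm]
    rw [h0] at hconst
    simp only [mul_zero, Complex.exp_zero, one_mul] at hconst
    rw [← hconst, ← mul_assoc, ← Complex.exp_add]
    simp
  -- exp computations
  have hexp : ∀ z : ℂ, z ≠ 0 →
      Complex.exp (-(Complex.log z)) = z⁻¹ ∧ Complex.exp (-(-(Complex.log z))) = z ∧
      Complex.exp (-(2 * -(Complex.log z))) = z * z := by
    intro z hz
    refine ⟨by rw [Complex.exp_neg, Complex.exp_log hz], by rw [neg_neg, Complex.exp_log hz], ?_⟩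
    have h : -(2 * -(Complex.log z)) = Complex.log z + Complex.log z := by ring
    rw [h, Complex.exp_add, Complex.exp_log hz]
  -- Step 3: two entire functions G, H
  set G : ℂ → ℂ := fun z => f !![z, -1; 1, 0] with hGdef
  set H : ℂ → ℂ := fun w => f !![1, 0; w, 1] with hHdef
  have hGdet : ∀ z : ℂ, (!![z, -1; 1, 0]).det = 1 := by
    intro z; rw [Matrix.det_fin_two_of]; ring
  have hHmdet : ∀ w : ℂ, (!![(1:ℂ), 0; w, 1]).det = 1 := by
    intro w; rw [Matrix.det_fin_two_of]; ring
  have hGdiff : Differentiable ℂ G := by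
    intro z
    have he : ∀ z : ℂ, !![z, -1; (1:ℂ), 0] = !![(0:ℂ),-1;1,0] + z • !![(1:ℂ),0;0,0] := by
      intro z; ext i j; fin_cases i <;> fin_cases j <;> simp
    have h1 : HasDerivAt (fun z : ℂ => !![z, -1; (1:ℂ), 0]) !![(1:ℂ),0;0,0] z := by
      have h0 : HasDerivAt (fun z : ℂ => !![(0:ℂ),-1;1,0] + z • !![(1:ℂ),0;0,0]) !![(1:ℂ),0;0,0] z := by
        have X := ((hasDerivAt_id z).smul_const (!![(1:ℂ),0;0,0])).const_add (!![(0:ℂ),-1;1,0])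
        simp only [one_smul, id_eq] at X
        exact X
      exact h0.congr_of_eventuallyEq (Filter.Eventually.of_forall fun x => he x)
    exact ((hf _ (hGdet z)).hasFDerivAt.comp_hasDerivAt z h1).differentiableAt
  have hHdiff : Differentiable ℂ H := by
    intro w
    have he : ∀ w : ℂ, !![(1:ℂ), 0; w, 1] = !![(1:ℂ),0;0,1] + w • !![(0:ℂ),0;1,0] := by
      intro w; ext i j; fin_cases i <;> fin_cases j <;> simp
    have h1 : HasDerivAt (fun w : ℂ => !![(1:ℂ), 0; w, 1]) !![(0:ℂ),0;1,0] w := by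
      have h0 : HasDerivAt (fun w : ℂ => !![(1:ℂ),0;0,1] + w • !![(0:ℂ),0;1,0]) !![(0:ℂ),0;1,0] w := by
        have X := ((hasDerivAt_id w).smul_const (!![(0:ℂ),0;1,0])).const_add (!![(1:ℂ),0;0,1])
        simp only [one_smul, id_eq] at X
        exact X
      exact h0.congr_of_eventuallyEq (Filter.Eventually.of_forall fun x => he x)
    exact ((hf _ (hHmdet w)).hasFDerivAt.comp_hasDerivAt w h1).differentiableAt
  -- key relation H (z⁻¹) = z * z * G z
  have hrel : ∀ z : ℂ, z ≠ 0 → H z⁻¹ = z * z * G z := by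
    intro z hz
    obtain ⟨he1, he2, he3⟩ := hexp z hz
    have e1 := hT _ (hGdet z) (-(Complex.log z))
    rw [he1, he2, he3] at e1
    have hm : !![z, -1; 1, 0] * !![z⁻¹, 0; 0, z] = !![(1:ℂ), -z; z⁻¹, 0] := by
      ext i j
      fin_cases i <;> fin_cases j <;>
        simp [Matrix.mul_apply, Fin.sum_univ_two, mul_inv_cancel₀ hz]
    rw [hm] at e1
    have hdet2 : (!![(1:ℂ), -z; z⁻¹, 0]).det = 1 := by
      rw [Matrix.det_fin_two_of]; field_simp; norm_num
    have e2 := hN _ hdet2 z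
    have hm2 : !![(1:ℂ), -z; z⁻¹, 0] * !![1, z; 0, 1] = !![(1:ℂ), 0; z⁻¹, 1] := by
      ext i j
      fin_cases i <;> fin_cases j <;>
        simp [Matrix.mul_apply, Fin.sum_univ_two, inv_mul_cancel₀ hz]
    rw [hm2] at e2
    exact e2.trans e1
  -- Step 4: Liouville
  obtain ⟨C₁, hC₁⟩ : ∃ C, ∀ z ∈ Metric.closedBall (0:ℂ) 1, ‖G z‖ ≤ C :=
    (isCompact_closedBall 0 1).exists_bound_of_continuousOn hGdiff.continuous.continuousOn
  obtain ⟨C₂, hC₂⟩ : ∃ C, ∀ w ∈ Metric.closedBall (0:ℂ) 1, ‖H w‖ ≤ C :=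
    (isCompact_closedBall 0 1).exists_bound_of_continuousOn hHdiff.continuous.continuousOn
  have hGbig : ∀ z : ℂ, 1 ≤ ‖z‖ → ‖z * z‖ * ‖G z‖ ≤ C₂ := by
    intro z hz1
    have hz : z ≠ 0 := by
      intro h; rw [h, norm_zero] at hz1; linarith
    have hzinv : ‖z⁻¹‖ ≤ 1 := by
      rw [norm_inv]
      exact inv_le_one_of_one_le₀ hz1
    have hb := hC₂ z⁻¹ (by simpa [Metric.mem_closedBall, dist_eq_norm] using hzinv)
    have h1 : ‖z * z‖ * ‖G z‖ = ‖H z⁻¹‖ := by rw [← norm_mul, hrel z hz]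
    linarith
  have hGconst : ∀ z : ℂ, G z = G 0 := by
    intro z
    apply hGdiff.apply_eq_apply_of_bounded
    refine (isBounded_iff_forall_norm_le).2 ⟨max C₁ C₂, ?_⟩
    rintro x ⟨w, rfl⟩
    rcases le_or_gt ‖w‖ 1 with h | h
    · exact le_max_of_le_left (hC₁ w (by simpa [Metric.mem_closedBall, dist_eq_norm] using h))
    · refine le_max_of_le_right ?_
      have key := hGbig w h.le
      have h2 : 1 ≤ ‖w * w‖ := by rw [norm_mul]; nlinarith
      nlinarith [norm_nonneg (G w)]
  have hG0 : G 0 = 0 := by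
    by_contra hne
    have hpos : 0 < ‖G 0‖ := norm_pos_iff.2 hne
    obtain ⟨n, hn⟩ := exists_nat_gt (C₂ / ‖G 0‖)
    have hdiv : C₂ < (n:ℝ) * ‖G 0‖ := by rwa [div_lt_iff₀ hpos] at hn
    set z : ℂ := ((n:ℂ) + 1)
    have hnormz : ‖z‖ = (n:ℝ) + 1 := by
      have : z = (((n:ℝ) + 1 : ℝ) : ℂ) := by push_cast; ring
      rw [this, Complex.norm_real]
      rw [Real.norm_eq_abs, abs_of_nonneg (by positivity)]
    have hnn : (0:ℝ) ≤ (n:ℝ) := Nat.cast_nonneg n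
    have hz1 : (1:ℝ) ≤ ‖z‖ := by rw [hnormz]; linarith
    have key := hGbig z hz1
    rw [hGconst z, norm_mul, hnormz] at key
    have hle : (n:ℝ) ≤ ((n:ℝ)+1) * ((n:ℝ)+1) := by nlinarith [sq_nonneg (n:ℝ)]
    have hmono := mul_le_mul_of_nonneg_right hle hpos.le
    linarith
  have hGzero : ∀ z : ℂ, G z = 0 := fun z => (hGconst z).trans hG0
  have hHzero : ∀ w : ℂ, H w = 0 := by
    have hHne : ∀ w : ℂ, w ≠ 0 → H w = 0 := by
      intro w hw
      have := hrel w⁻¹ (inv_ne_zero hw)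
      rw [inv_inv, hGzero, mul_zero] at this
      exact this
    intro w
    rcases eq_or_ne w 0 with rfl | hw
    · have h1 : Filter.Tendsto H (nhdsWithin 0 {(0:ℂ)}ᶜ) (nhds (H 0)) :=
        (hHdiff 0).continuousAt.continuousWithinAt
      have h2 : Filter.Tendsto H (nhdsWithin 0 {(0:ℂ)}ᶜ) (nhds 0) := by
        refine Filter.Tendsto.congr' ?_ tendsto_const_nhds
        filter_upwards [self_mem_nhdsWithin] with x hx
        exact (hHne x hx).symm
      exact tendsto_nhds_unique h1 h2
    · exact hHne w hw
  -- Step 5: conclusion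
  intro U hU
  obtain ⟨a, b, c, d, rfl⟩ : ∃ a b c d, U = !![a, b; c, d] :=
    ⟨_, _, _, _, Matrix.eta_fin_two U⟩
  have hdet : a * d - b * c = 1 := by rwa [Matrix.det_fin_two_of] at hU
  by_cases hc : c = 0
  · -- c = 0 : a * d = 1
    have had : a * d = 1 := by rw [hc] at hdet; linear_combination hdet
    have ha0 : a ≠ 0 := left_ne_zero_of_mul_eq_one had
    obtain ⟨he1, he2, he3⟩ := hexp a ha0
    have e1 := hT _ hU (-(Complex.log a))
    rw [he1, he2, he3] at e1
    have hm : !![a, b; c, d] * !![a⁻¹, 0; 0, a] = !![(1:ℂ), b*a; 0, 1] := by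
      ext i j
      fin_cases i <;> fin_cases j <;>
        simp [Matrix.mul_apply, Fin.sum_univ_two, mul_inv_cancel₀ ha0, hc] <;>
        linear_combination had
    rw [hm] at e1
    have hone : !![(1:ℂ), b*a; 0, 1] = (1 : Matrix (Fin 2) (Fin 2) ℂ) * !![(1:ℂ), b*a; 0, 1] :=
      (one_mul _).symm
    rw [hone, hN 1 (by simp) (b*a)] at e1
    have hf1 : f 1 = 0 := by
      have h0 := hHzero 0
      rw [hHdef] at h0
      simpa [← Matrix.one_fin_two] using h0
    rw [hf1] at e1
    rcases mul_eq_zero.1 e1.symm with h | h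
    · exact absurd (mul_eq_zero.1 h) (by simp [ha0])
    · exact h
  · obtain ⟨he1, he2, he3⟩ := hexp c hc
    have e1 := hT _ hU (-(Complex.log c))
    rw [he1, he2, he3] at e1
    have hm : !![a, b; c, d] * !![c⁻¹, 0; 0, c] = !![a*c⁻¹, -1; 1, 0] * !![1, d*c; 0, 1] := by
      ext i j
      fin_cases i <;> fin_cases j <;>
        simp [Matrix.mul_apply, Fin.sum_univ_two, mul_inv_cancel₀ hc]
      rw [show a * c⁻¹ * (d * c) = a * d * (c⁻¹ * c) by ring, inv_mul_cancel₀ hc, mul_one]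
      linear_combination -hdet
    rw [hm] at e1
    have hdet3 : (!![a*c⁻¹, -1; 1, 0]).det = 1 := by rw [Matrix.det_fin_two_of]; ring
    rw [hN _ hdet3 (d*c)] at e1
    have : c * c * f !![a, b; c, d] = 0 := by rw [← e1]; exact hGzero _
    rcases mul_eq_zero.1 this with h | h
    · exact absurd (mul_eq_zero.1 h) (by simp [hc])
    · exact h
end

section
/- Let (f_k) be a sequence of holomorphic functions on an open set U ⊆ ℂⁿ that is uniformly bounded on every compact subset of U. Then there exists a subsequence converging uniformly on every compact subset of U to a holomorphic function f. -/
open Metric Set Filter Topology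

/-- Cauchy estimate: a holomorphic function bounded by `C` on `closedBall w r`
has `‖fderiv ℂ f w‖ ≤ C / r`. -/
lemma montel_fderiv_bound {E : Type*} [NormedAddCommGroup E] [NormedSpace ℂ E]
    {U : Set E} (hU : IsOpen U) {f : E → ℂ} (hf : DifferentiableOn ℂ f U)
    {w : E} {r C : ℝ} (hr : 0 < r) (hball : Metric.closedBall w r ⊆ U)
    (hC : ∀ y ∈ Metric.closedBall w r, ‖f y‖ ≤ C) :
    ‖fderiv ℂ f w‖ ≤ C / r := by
  have hC0 : 0 ≤ C := le_trans (norm_nonneg _) (hC w (mem_closedBall_self hr.le))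
  refine ContinuousLinearMap.opNorm_le_bound _ (div_nonneg hC0 hr.le) fun v => ?_
  rcases eq_or_ne v 0 with rfl | hv
  · simp
  have hv0 : (0:ℝ) < ‖v‖ := norm_pos_iff.mpr hv
  set s : ℝ := r / ‖v‖ with hs_def
  have hs : 0 < s := div_pos hr hv0
  set g : ℂ → ℂ := fun z => f (w + z • v) with hg_def
  set V : Set ℂ := {z : ℂ | w + z • v ∈ U} with hV_def
  have hVopen : IsOpen V := hU.preimage (by continuity)
  have hmem : ∀ z : ℂ, ‖z‖ ≤ s → w + z • v ∈ Metric.closedBall w r := by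
    intro z hz
    rw [Metric.mem_closedBall, dist_eq_norm, add_sub_cancel_left, norm_smul]
    calc ‖z‖ * ‖v‖ ≤ s * ‖v‖ := by gcongr
    _ = r := by rw [hs_def]; exact div_mul_cancel₀ r hv0.ne'
  have hsub : Metric.closedBall (0:ℂ) s ⊆ V := by
    intro z hz
    rw [Metric.mem_closedBall, dist_zero_right] at hz
    exact hball (hmem z hz)
  have hgV : DifferentiableOn ℂ g V := by
    intro z hz
    exact ((hf _ hz).comp z
      (((differentiable_id.smul_const v).const_add w).differentiableAt.differentiableWithinAt)
      fun t ht => ht)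
  have hderiv : HasDerivAt g (fderiv ℂ f w v) 0 := by
    have h1 : HasFDerivAt f (fderiv ℂ f w) (w + (0:ℂ) • v) := by
      rw [zero_smul, add_zero]
      exact (hf.differentiableAt (hU.mem_nhds (hball (mem_closedBall_self hr.le)))).hasFDerivAt
    have h2 : HasDerivAt (fun z : ℂ => w + z • v) v 0 := by
      simpa using ((hasDerivAt_id (0:ℂ)).smul_const v).const_add w
    exact h1.comp_hasDerivAt 0 h2
  have key : ‖fderiv ℂ f w v‖ ≤ C / s := by
    rw [← hderiv.deriv, ← Complex.cderiv_eq_deriv hVopen hgV hs hsub]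
    refine Complex.norm_cderiv_le hs fun z hz => ?_
    rw [mem_sphere_iff_norm, sub_zero] at hz
    exact hC _ (hmem z hz.le)
  calc ‖fderiv ℂ f w v‖ ≤ C / s := key
  _ = C / r * ‖v‖ := by rw [hs_def]; field_simp

/-- uniform Lipschitz estimate on the half-radius ball -/
lemma montel_lipschitz {E : Type*} [NormedAddCommGroup E] [NormedSpace ℂ E]
    {U : Set E} (hU : IsOpen U) {f : E → ℂ} (hf : DifferentiableOn ℂ f U)
    {x : E} {r C : ℝ} (hr : 0 < r) (hball : Metric.closedBall x r ⊆ U)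
    (hC : ∀ y ∈ Metric.closedBall x r, ‖f y‖ ≤ C) :
    ∀ y ∈ Metric.closedBall x (r/2), ∀ z ∈ Metric.closedBall x (r/2),
      ‖f y - f z‖ ≤ C / (r/2) * ‖y - z‖ := by
  intro y hy z hz
  have hsubU : Metric.closedBall x (r/2) ⊆ U := fun t ht =>
    hball (closedBall_subset_closedBall (by linarith) ht)
  refine Convex.norm_image_sub_le_of_norm_fderiv_le
    (fun w hw => hf.differentiableAt (hU.mem_nhds (hsubU hw))) (fun w hw => ?_)
    (convex_closedBall x (r/2)) hz hy
  have hsub : Metric.closedBall w (r/2) ⊆ Metric.closedBall x r := by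
    intro t ht
    rw [Metric.mem_closedBall] at *
    calc dist t x ≤ dist t w + dist w x := dist_triangle _ _ _
    _ ≤ r/2 + r/2 := add_le_add ht hw
    _ = r := by ring
  exact montel_fderiv_bound hU hf (by linarith) (hsub.trans hball)
    (fun t ht => hC t (hsub ht))


/-- Montel's theorem in ℂⁿ: a sequence of holomorphic functions on an
open set `U ⊆ ℂⁿ` which is uniformly bounded on every compact subset of `U` has a
subsequence converging uniformly on every compact subset of `U` to a holomorphic
function. -/
theorem stmt16 {n : ℕ} (U : Set (Fin n → ℂ)) (hU : IsOpen U)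
    (f : ℕ → (Fin n → ℂ) → ℂ)
    (hf : ∀ k, DifferentiableOn ℂ (f k) U)
    (hbdd : ∀ K ⊆ U, IsCompact K → ∃ C : ℝ, ∀ k, ∀ x ∈ K, ‖f k x‖ ≤ C) :
    ∃ φ : ℕ → ℕ, StrictMono φ ∧ ∃ g : (Fin n → ℂ) → ℂ,
      DifferentiableOn ℂ g U ∧
      ∀ K ⊆ U, IsCompact K →
        TendstoUniformlyOn (fun k => f (φ k)) g Filter.atTop K := by
  classical
  haveI : LocallyCompactSpace ↥U := hU.isOpenEmbedding_subtypeVal.locallyCompactSpace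
  let F : ℕ → C(↥U, ℂ) := fun k => ⟨fun x => f k x, ((hf k).continuousOn).restrict⟩
  -- Step 1: equicontinuity of the family `F` via Cauchy estimates
  have hequi : Equicontinuous fun k => (F k : ↥U → ℂ) := by
    intro x₀
    rw [Metric.equicontinuousAt_iff]
    intro ε hε
    obtain ⟨R, hR, hRU⟩ := (Metric.nhds_basis_closedBall.mem_iff).mp (hU.mem_nhds x₀.2)
    obtain ⟨C, hC⟩ := hbdd (Metric.closedBall ↑x₀ R) hRU (isCompact_closedBall _ _)
    set L : ℝ := C / (R/2) with hLdef
    have hC0 : 0 ≤ C :=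
      le_trans (norm_nonneg _) (hC 0 _ (mem_closedBall_self hR.le))
    have hL0 : 0 ≤ L := div_nonneg hC0 (by linarith)
    refine ⟨min (R/2) (ε / (L+1)), lt_min (by linarith) (by positivity), fun x hx k => ?_⟩
    have hdist : dist (x : Fin n → ℂ) (↑x₀) < min (R/2) (ε/(L+1)) := hx
    have h1 : (x : Fin n → ℂ) ∈ Metric.closedBall (↑x₀) (R/2) :=
      mem_closedBall.mpr (le_of_lt (lt_of_lt_of_le hdist (min_le_left _ _)))
    have h2 : (x₀ : Fin n → ℂ) ∈ Metric.closedBall (↑x₀) (R/2) :=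
      mem_closedBall_self (by linarith)
    have hlip := montel_lipschitz hU (hf k) hR hRU (fun y hy => hC k y hy)
      (↑x₀) h2 (↑x) h1
    have : dist (f k ↑x₀) (f k ↑x) ≤ L * dist (↑x₀ : Fin n → ℂ) ↑x := by
      rw [dist_eq_norm]
      simpa [dist_eq_norm] using hlip
    refine lt_of_le_of_lt this ?_
    have hdist' : dist (↑x₀ : Fin n → ℂ) ↑x ≤ ε / (L+1) :=
      le_of_lt (by rw [dist_comm]; exact lt_of_lt_of_le hdist (min_le_right _ _))
    calc L * dist (↑x₀ : Fin n → ℂ) ↑x ≤ L * (ε / (L+1)) :=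
          mul_le_mul_of_nonneg_left hdist' hL0
    _ < (L+1) * (ε / (L+1)) :=
          mul_lt_mul_of_pos_right (lt_add_one L) (by positivity)
    _ = ε := by field_simp
  -- Step 2: Arzelà–Ascoli
  have hclemb : Topology.IsClosedEmbedding
      (UniformOnFun.ofFun {K : Set ↥U | IsCompact K} ∘ (DFunLike.coe : C(↥U,ℂ) → ↥U → ℂ)) := by
    refine ⟨ContinuousMap.isUniformEmbedding_toUniformOnFunIsCompact.isEmbedding, ?_⟩
    rw [show (UniformOnFun.ofFun {K : Set ↥U | IsCompact K} ∘
        (DFunLike.coe : C(↥U,ℂ) → ↥U → ℂ)) =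
        (ContinuousMap.toUniformOnFunIsCompact : C(↥U,ℂ) → _) from rfl,
      ContinuousMap.range_toUniformOnFunIsCompact]
    exact UniformOnFun.isClosed_setOf_continuous
      CompactlyCoherentSpace.isCoherentWith
  have hcpt : IsCompact (closure (Set.range F)) := by
    refine ArzelaAscoli.isCompact_closure_of_isClosedEmbedding (fun K hK => hK) hclemb
      (fun K hK => ?_) (fun K hK x hx => ?_)
    · refine Equicontinuous.equicontinuousOn ?_ K
      intro x₀ u hu
      filter_upwards [hequi x₀ u hu] with y hy i
      obtain ⟨k, hk⟩ := i.2
      simp only [Function.comp_apply, ← hk]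
      exact hy k
    · obtain ⟨C, hC⟩ := hbdd {(x : Fin n → ℂ)} (by simpa using x.2) isCompact_singleton
      refine ⟨Metric.closedBall 0 C, isCompact_closedBall _ _, fun i hi => ?_⟩
      obtain ⟨k, rfl⟩ := hi
      exact mem_closedBall_zero_iff.mpr (hC k _ rfl)
  -- Step 3: extract a convergent subsequence
  obtain ⟨G, -, φ, hφ, hGconv⟩ :=
    hcpt.isSeqCompact (x := F) (fun k => subset_closure (Set.mem_range_self k))
  rw [ContinuousMap.tendsto_iff_forall_isCompact_tendstoUniformlyOn] at hGconv
  set g : (Fin n → ℂ) → ℂ := fun y => if h : y ∈ U then G ⟨y, h⟩ else 0 with hgdef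
  -- Step 4: uniform convergence on compacts of `U`
  have hK : ∀ K ⊆ U, IsCompact K →
      TendstoUniformlyOn (fun k => f (φ k)) g Filter.atTop K := by
    intro K hKU hKc
    have hK'c : IsCompact ((Subtype.val : ↥U → Fin n → ℂ) ⁻¹' K) := by
      rw [Topology.IsEmbedding.subtypeVal.isCompact_iff]
      convert hKc
      simpa [Set.image_preimage_eq_inter_range] using Set.inter_eq_left.mpr hKU
    have h1 := hGconv _ hK'c
    rw [Metric.tendstoUniformlyOn_iff] at h1 ⊢
    intro ε hε
    filter_upwards [h1 ε hε] with k hk y hy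
    have := hk ⟨y, hKU hy⟩ hy
    simp [hgdef, dif_pos (hKU hy)]
    exact this
  refine ⟨φ, hφ, g, ?_, hK⟩
  -- Step 5: the limit is holomorphic
  intro x hx
  obtain ⟨R, hR, hRU⟩ := (Metric.nhds_basis_closedBall.mem_iff).mp (hU.mem_nhds hx)
  set s : Set (Fin n → ℂ) := Metric.ball x (R/4) with hsdef
  have hsU : s ⊆ U := fun t ht =>
    hRU (closedBall_subset_closedBall (by linarith) (ball_subset_closedBall ht))
  set Fd : ℕ → (Fin n → ℂ) → ((Fin n → ℂ) →L[ℂ] ℂ) :=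
    fun k w => fderiv ℂ (f (φ k)) w with hFddef
  have hsub2 : ∀ w ∈ s, Metric.closedBall w (R/2) ⊆ Metric.closedBall x R := by
    intro w hw t ht
    rw [Metric.mem_closedBall] at *
    rw [Metric.mem_ball] at hw
    calc dist t x ≤ dist t w + dist w x := dist_triangle _ _ _
    _ ≤ R/2 + R/4 := add_le_add ht hw.le
    _ ≤ R := by linarith
  have hucf : UniformCauchySeqOn (fun k => f (φ k)) Filter.atTop (Metric.closedBall x R) :=
    (hK _ hRU (isCompact_closedBall _ _)).uniformCauchySeqOn
  have hucd : UniformCauchySeqOn Fd Filter.atTop s := by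
    rw [Metric.uniformCauchySeqOn_iff] at hucf ⊢
    intro ε hε
    obtain ⟨N, hN⟩ := hucf (ε * (R/2) / 2) (by positivity)
    refine ⟨N, fun m hm k hk w hw => ?_⟩
    have hdiff : DifferentiableOn ℂ (fun y => f (φ m) y - f (φ k) y) U :=
      (hf (φ m)).sub (hf (φ k))
    have hbound : ∀ y ∈ Metric.closedBall w (R/2),
        ‖f (φ m) y - f (φ k) y‖ ≤ ε * (R/2) / 2 := by
      intro y hy
      rw [← dist_eq_norm]
      exact le_of_lt (hN m hm k hk y (hsub2 w hw hy))
    have hfb := montel_fderiv_bound hU hdiff (by linarith)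
      (fun t ht => hRU (hsub2 w hw ht)) hbound
    have heq : fderiv ℂ (fun y => f (φ m) y - f (φ k) y) w = Fd m w - Fd k w := by
      rw [hFddef]
      exact fderiv_fun_sub
        ((hf (φ m)).differentiableAt (hU.mem_nhds (hsU hw)))
        ((hf (φ k)).differentiableAt (hU.mem_nhds (hsU hw)))
    rw [dist_eq_norm, ← heq]
    refine lt_of_le_of_lt hfb ?_
    rw [div_lt_iff₀ (by linarith : (0:ℝ) < R/2)]
    calc ε * (R/2) / 2 < ε * (R/2) := by
          have : (0:ℝ) < ε * (R/2) := by positivity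
          linarith
    _ = ε * (R/2) := rfl
  set g' : (Fin n → ℂ) → ((Fin n → ℂ) →L[ℂ] ℂ) :=
    fun w => limUnder Filter.atTop (fun k => Fd k w) with hg'def
  have hgd : ∀ w ∈ s, Tendsto (fun k => Fd k w) Filter.atTop (𝓝 (g' w)) := by
    intro w hw
    have hcs : CauchySeq (fun k => Fd k w) := by
      rw [Metric.cauchySeq_iff]
      intro ε hε
      rw [Metric.uniformCauchySeqOn_iff] at hucd
      obtain ⟨N, hN⟩ := hucd ε hε
      exact ⟨N, fun m hm k hk => hN m hm k hk w hw⟩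
    exact hcs.tendsto_limUnder
  have htu : TendstoUniformlyOn Fd g' Filter.atTop s :=
    hucd.tendstoUniformlyOn_of_tendsto hgd
  exact ((hasFDerivAt_of_tendstoUniformlyOn isOpen_ball htu
    (fun k w hw => ((hf (φ k)).differentiableAt (hU.mem_nhds (hsU hw))).hasFDerivAt)
    (fun w hw => (hK {w} (Set.singleton_subset_iff.mpr (hsU hw))
      isCompact_singleton).tendsto_at rfl)
    (mem_ball_self (by linarith : (0:ℝ) < R/4))).differentiableAt).differentiableWithinAt
end
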